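/- Let n ≥ 1 and let 0 < ε_{1,2} < ε_{0,1} < ε_{0,2} be reals. Let A ⊆ ℝⁿ be a set such that for all x, y ∈ A, either ‖x−y‖ ≤ ε_{1,2} or ε_{0,1} ≤ ‖x−y‖ ≤ ε_{0,2}. Then A can be covered by at most (3·ε_{0,2}/ε_{0,1})^n closed balls of radius ε_{1,2}. -/

import Mathlib

/-!
A maximal `ε₁₂`-separated subset of `A` is a finite `ε₁₂`-cover of `A`. By the distance dichotomy
its points are pairwise at least `ε₀₁` and at most `ε₀₂` apart, so the disjoint balls of radius
`ε₀₁ / 2` around them fit into one ball of radius `ε₀₂ + ε₀₁ / 2`; comparing volumes bounds its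
size by `((2 ε₀₂ + ε₀₁) / ε₀₁) ^ n ≤ (3 ε₀₂ / ε₀₁) ^ n`.
-/

open Metric MeasureTheory Set Module Finset
open scoped ENNReal NNReal

theorem Metric.exists_finset_card_le_of_packingNumber_le {X : Type*} [PseudoMetricSpace X]
    {ε : ℝ≥0} {A : Set X} {N : ℕ} (hN : packingNumber ε A ≤ N) :
    ∃ F : Finset X, #F ≤ N ∧ A ⊆ ⋃ c ∈ F, closedBall c ε := by
  have htop : packingNumber ε A ≠ ⊤ := ne_top_of_le_ne_top (ENat.natCast_ne_top N) hN
  have hfin : (maximalSeparatedSet ε A).Finite :=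
    finite_of_encard_le_coe ((encard_maximalSeparatedSet htop).le.trans hN)
  refine ⟨hfin.toFinset, ?_, ?_⟩
  · rw [← ENat.natCast_le_natCast, ← hfin.encard_eq_coe_toFinset_card,
      encard_maximalSeparatedSet htop]
    exact hN
  · simpa using isCover_iff_subset_iUnion_closedBall.mp (isCover_maximalSeparatedSet htop)

section

variable {E : Type*} [NormedAddCommGroup E] [NormedSpace ℝ E] [FiniteDimensional ℝ E]
  {r R : ℝ}

theorem Finset.card_le_of_pairwise_le_dist (hr : 0 < r) (hR : 0 ≤ R) {S : Finset E}
    (hsep : (S : Set E).Pairwise (r ≤ dist · ·)) (hbdd : ∀ x ∈ S, ∀ y ∈ S, dist x y ≤ R) :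
    (#S : ℝ) ≤ ((2 * R + r) / r) ^ finrank ℝ E := by
  rcases S.eq_empty_or_nonempty with rfl | ⟨x₀, hx₀⟩
  · simp only [card_empty, Nat.cast_zero]
    positivity
  borelize E
  set μ : Measure E := Measure.addHaar
  have hdisj : (S : Set E).PairwiseDisjoint (ball · (r / 2)) := fun x hx y hy hxy =>
    ball_disjoint_ball (by linarith [hsep hx hy hxy])
  have hsub : ⋃ x ∈ S, ball x (r / 2) ⊆ closedBall x₀ (R + r / 2) :=
    iUnion₂_subset fun x hx => ball_subset_closedBall.trans
      (closedBall_subset_closedBall' (by linarith [hbdd x hx x₀ hx₀]))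
  have hvol : (#S : ℝ≥0∞) * ENNReal.ofReal ((r / 2) ^ finrank ℝ E)
      ≤ ENNReal.ofReal ((R + r / 2) ^ finrank ℝ E) := by
    rw [← ENNReal.mul_le_mul_iff_left (measure_ball_pos μ 0 one_pos).ne' measure_ball_lt_top.ne]
    calc _ = ∑ x ∈ S, μ (ball x (r / 2)) := by
          simp [Measure.addHaar_ball_of_pos μ _ (half_pos hr), mul_assoc]
      _ = μ (⋃ x ∈ S, ball x (r / 2)) :=
          (measure_biUnion_finset hdisj fun _ _ => measurableSet_ball).symm
      _ ≤ μ (closedBall x₀ (R + r / 2)) := measure_mono hsub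
      _ = _ := Measure.addHaar_closedBall μ x₀ (by positivity)
  rw [← ENNReal.ofReal_natCast, ← ENNReal.ofReal_mul (by positivity),
    ENNReal.ofReal_le_ofReal_iff (by positivity)] at hvol
  calc (#S : ℝ) ≤ (R + r / 2) ^ finrank ℝ E / (r / 2) ^ finrank ℝ E :=
        (le_div_iff₀ (by positivity)).mpr hvol
    _ = ((2 * R + r) / r) ^ finrank ℝ E := by
        rw [← div_pow]
        congr 1
        field_simp

theorem Set.encard_le_of_pairwise_le_dist (hr : 0 < r) (hR : 0 ≤ R) {C : Set E}
    (hsep : C.Pairwise (r ≤ dist · ·)) (hbdd : ∀ x ∈ C, ∀ y ∈ C, dist x y ≤ R) :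
    C.encard ≤ ⌊((2 * R + r) / r) ^ finrank ℝ E⌋₊ := by
  by_contra! hlt
  obtain ⟨t, htC, ht⟩ := exists_subset_encard_eq (Order.add_one_le_of_lt hlt)
  have htfin : t.Finite := finite_of_encard_eq_coe ht
  have hcard := Finset.card_le_of_pairwise_le_dist hr hR (S := htfin.toFinset)
    (by simpa using hsep.mono htC) (by simpa using fun x hx y hy => hbdd x (htC hx) y (htC hy))
  rw [htfin.encard_eq_coe_toFinset_card] at ht
  norm_cast at ht
  rw [ht] at hcard
  exact (Nat.lt_floor_add_one _).not_ge (by exact_mod_cast hcard)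

theorem packingNumber_le_of_norm_sub_dichotomy {a b c : ℝ} (ha : 0 ≤ a) (hab : a < b) (hbc : b ≤ c)
    {A : Set E} (hA : ∀ x ∈ A, ∀ y ∈ A, ‖x - y‖ ≤ a ∨ (b ≤ ‖x - y‖ ∧ ‖x - y‖ ≤ c)) :
    packingNumber a.toNNReal A ≤ ⌊((2 * c + b) / b) ^ finrank ℝ E⌋₊ := by
  refine iSup₂_le fun C hCA => iSup_le fun hC => ?_
  refine encard_le_of_pairwise_le_dist (by linarith) (by linarith) ?_ ?_
  · intro x hx y hy hxy
    have hlt : (a.toNNReal : ℝ≥0∞) < edist x y := hC hx hy hxy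
    rw [edist_dist, ENNReal.coe_lt_ofReal, Real.coe_toNNReal _ ha, dist_eq_norm] at hlt
    rw [dist_eq_norm]
    rcases hA x (hCA hx) y (hCA hy) with h | h
    · linarith
    · exact h.1
  · intro x hx y hy
    rw [dist_eq_norm]
    rcases hA x (hCA hx) y (hCA hy) with h | h <;> linarith

end

theorem stmt_2_general (n : ℕ) (ε₁₂ ε₀₁ ε₀₂ : ℝ)
    (h1 : 0 < ε₁₂) (h2 : ε₁₂ < ε₀₁) (h3 : ε₀₁ < ε₀₂)
    (A : Set (EuclideanSpace ℝ (Fin n)))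
    (hA : ∀ x ∈ A, ∀ y ∈ A,
      ‖x - y‖ ≤ ε₁₂ ∨ (ε₀₁ ≤ ‖x - y‖ ∧ ‖x - y‖ ≤ ε₀₂)) :
    ∃ F : Finset (EuclideanSpace ℝ (Fin n)),
      (F.card : ℝ) ≤ (3 * ε₀₂ / ε₀₁) ^ n ∧
      A ⊆ ⋃ c ∈ F, Metric.closedBall c ε₁₂ := by
  have hε₀₁ : 0 < ε₀₁ := h1.trans h2
  have hratio : 0 ≤ (2 * ε₀₂ + ε₀₁) / ε₀₁ := div_nonneg (by linarith) hε₀₁.le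
  have hpack := packingNumber_le_of_norm_sub_dichotomy h1.le h2 h3.le hA
  rw [finrank_euclideanSpace_fin] at hpack
  obtain ⟨F, hcard, hcover⟩ := exists_finset_card_le_of_packingNumber_le hpack
  refine ⟨F, ?_, by simpa [h1.le] using hcover⟩
  calc (#F : ℝ) ≤ ((2 * ε₀₂ + ε₀₁) / ε₀₁) ^ n :=
        (Nat.cast_le.mpr hcard).trans (Nat.floor_le (pow_nonneg hratio n))
    _ ≤ (3 * ε₀₂ / ε₀₁) ^ n := by gcongr; linarith

/-- base case of the covering lemma. -/
theorem stmt_2 (n : ℕ) (hn : 1 ≤ n) (ε₁₂ ε₀₁ ε₀₂ : ℝ)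
    (h1 : 0 < ε₁₂) (h2 : ε₁₂ < ε₀₁) (h3 : ε₀₁ < ε₀₂)
    (A : Set (EuclideanSpace ℝ (Fin n)))
    (hA : ∀ x ∈ A, ∀ y ∈ A,
      ‖x - y‖ ≤ ε₁₂ ∨ (ε₀₁ ≤ ‖x - y‖ ∧ ‖x - y‖ ≤ ε₀₂)) :
    ∃ F : Finset (EuclideanSpace ℝ (Fin n)),
      (F.card : ℝ) ≤ (3 * ε₀₂ / ε₀₁) ^ n ∧
      A ⊆ ⋃ c ∈ F, Metric.closedBall c ε₁₂ :=
  stmt_2_general n ε₁₂ ε₀₁ ε₀₂ h1 h2 h3 A hA
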